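/- arXiv:1808.01072 — 6 statements merged into one kernel-verified Lean document; each statement's English description precedes it below -/
import Mathlib

section
/- Let K be a compact convex subset of a finite-dimensional real normed vector space, let μ be a Borel probability measure on K, and let b = ∫ x dμ(x) be its barycenter. If b is an extreme point of K, then μ is the Dirac (point) measure at b; equivalently, x = b for μ-almost every x. -/
/-!
If `μ` is not a point mass, some measurable set `t` and its complement both have positive mass
and different averages. Both averages lie in `K` by Jensen's inequality, and the barycenter is a
proper convex combination of them, so it cannot be an extreme point of `K`.
-/

open MeasureTheory

theorem MeasureTheory.Measure.eq_dirac_of_ae_eq {α : Type*} [MeasurableSpace α] {μ : Measure α}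
    [IsProbabilityMeasure μ] {a : α} (h : ∀ᵐ x ∂μ, x = a) : μ = Measure.dirac a :=
  calc μ = μ.map id := Measure.map_id.symm
    _ = μ.map (fun _ ↦ a) := Measure.map_congr h
    _ = Measure.dirac a := by rw [Measure.map_const, measure_univ, one_smul]

theorem Convex.ae_eq_average_of_average_mem_extremePoints {α E : Type*} [MeasurableSpace α]
    [NormedAddCommGroup E] [NormedSpace ℝ E] [CompleteSpace E] {μ : Measure α} [IsFiniteMeasure μ]
    {s : Set E} {f : α → E} (hs : Convex ℝ s) (hsc : IsClosed s) (hfs : ∀ᵐ x ∂μ, f x ∈ s)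
    (hfi : Integrable f μ) (hext : (⨍ x, f x ∂μ) ∈ s.extremePoints ℝ) :
    f =ᵐ[μ] Function.const α (⨍ x, f x ∂μ) := by
  refine (ae_eq_const_or_exists_average_ne_compl hfi).resolve_right ?_
  rintro ⟨t, ht, hμt, hμtc, hne⟩
  have hmem : ∀ {u}, μ u ≠ 0 → (⨍ x in u, f x ∂μ) ∈ s := fun hu ↦
    hs.set_average_mem hsc hu (measure_ne_top μ _) (ae_restrict_of_ae hfs) hfi.integrableOn
  have h := (mem_extremePoints.1 hext).2 _ (hmem hμt) _ (hmem hμtc)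
    (average_mem_openSegment_compl_self ht.nullMeasurableSet hμt hμtc hfi)
  exact hne (h.1.trans h.2.symm)

/-- Let `K` be a compact convex subset of a finite-dimensional real normed
vector space, `μ` a Borel probability measure on `K`, and `b = ∫ x dμ(x)` its barycenter.
If `b` is an extreme point of `K`, then `μ` is the Dirac measure at `b`; equivalently,
`x = b` for `μ`-almost every `x`. -/
theorem extremePoint_barycenter_imp_dirac
    {E : Type*} [NormedAddCommGroup E] [NormedSpace ℝ E] [FiniteDimensional ℝ E]
    [MeasurableSpace E] [BorelSpace E]
    (K : Set E) (hKcompact : IsCompact K) (hKconvex : Convex ℝ K)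
    (μ : Measure E) [IsProbabilityMeasure μ] (hμK : μ Kᶜ = 0)
    (b : E) (hb : b = ∫ x, x ∂μ)
    (hext : b ∈ Set.extremePoints ℝ K) :
    μ = Measure.dirac b ∧ ∀ᵐ x ∂μ, x = b := by
  have haeK : ∀ᵐ x ∂μ, x ∈ K := hμK
  obtain ⟨C, hC⟩ := hKcompact.isBounded.exists_norm_le
  have hint : Integrable id μ :=
    .of_bound aestronglyMeasurable_id C (haeK.mono fun x hx ↦ hC x hx)
  rw [hb, ← average_eq_integral] at hext ⊢
  have hae : ∀ᵐ x ∂μ, x = ⨍ x, x ∂μ :=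
    hKconvex.ae_eq_average_of_average_mem_extremePoints hKcompact.isClosed haeK hint hext
  exact ⟨Measure.eq_dirac_of_ae_eq hae, hae⟩
end

section
/- Let 𝒟 be a nonempty finite set (of possible datasets), let L : (density matrices of dimension d) × 𝒟 → ℝ be a measurable nonnegative likelihood function, and let π be a Borel probability measure on the density matrices of dimension d. For a dataset D with normalization Z(D) = ∫ L(ρ, D) dπ(ρ) > 0, define the posterior-mean estimator ρ̂(D) = Z(D)⁻¹ · ∫ ρ · L(ρ, D) dπ(ρ). Suppose D₁, D₂ ∈ 𝒟 satisfy Z(D₁) > 0 and Z(D₂) > 0, and the estimates σ₁ = ρ̂(D₁) and σ₂ = ρ̂(D₂) are both pure states with σ₁ ≠ σ₂. Then L(σ₂, D₁) = 0 and L(σ₁, D₂) = 0; i.e., each dataset must rule out the pure state reported for the other dataset. (Consequently, an estimator that is a posterior-mean—i.e., Bayes for a Bregman divergence—cannot report two distinct pure states on datasets unless each dataset assigns zero likelihood to the other's estimate.) -/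
open Matrix MeasureTheory
open scoped ComplexOrder Classical

/-- A density matrix of dimension `d`: a complex `d × d` positive semidefinite matrix
of trace 1. -/
def IsDensityMatrix {d : ℕ} (ρ : Matrix (Fin d) (Fin d) ℂ) : Prop :=
  ρ.PosSemidef ∧ ρ.trace = 1

/-- A pure state: a density matrix that is a rank-one orthogonal projection,
i.e. it satisfies `ρ * ρ = ρ` and has rank one. -/
def IsPureState {d : ℕ} (ρ : Matrix (Fin d) (Fin d) ℂ) : Prop :=
  IsDensityMatrix ρ ∧ ρ * ρ = ρ ∧ ρ.rank = 1

noncomputable instance matrixMeasurableSpace {d : ℕ} :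
    MeasurableSpace (Matrix (Fin d) (Fin d) ℂ) := borel _

instance matrixBorelSpace {d : ℕ} :
    BorelSpace (Matrix (Fin d) (Fin d) ℂ) := ⟨rfl⟩

/-! For a pure state `σ` and a density matrix `ρ`,
`‖ρ - σ‖₂² = tr ρ² - 2 Re tr (σ ρ) + 1` and `tr ρ² ≤ (tr ρ)² = 1`, so `Re tr (σ ρ) ≤ 1` with
equality only at `ρ = σ`. If the posterior mean `σ` of a dataset `D` is pure, then
`∫ L(ρ, D) (1 - Re tr (σ ρ)) dπ = Z(D) - Z(D) tr σ² = 0` with a nonnegative integrand, so the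
posterior is concentrated on `σ`; as `Z(D) > 0`, `σ` is an atom of `π`. The atom `σ₂` cannot
lie in the null set `{ρ ≠ σ₁ | L(ρ, D₁) ≠ 0}`, so `L(σ₂, D₁) = 0`, and symmetrically. -/

namespace Matrix

theorem PosSemidef.trace_mul_self_le_sq_trace {n 𝕜 : Type*} [Fintype n] [RCLike 𝕜]
    {A : Matrix n n 𝕜} (hA : A.PosSemidef) : (A * A).trace ≤ A.trace ^ 2 := by
  rw [hA.1.trace_eq_sum_eigenvalues]
  conv_lhs => rw [hA.1.spectral_theorem, ← map_mul, Unitary.conjStarAlgAut_apply,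
    trace_mul_cycle, Unitary.coe_star_mul_self, one_mul, diagonal_mul_diagonal, trace_diagonal]
  simp only [Function.comp_apply, ← RCLike.ofReal_sum, ← RCLike.ofReal_pow,
    RCLike.ofReal_le_ofReal, ← sq]
  exact Finset.sum_sq_le_sq_sum_of_nonneg fun i _ => hA.eigenvalues_nonneg i

end Matrix

theorem Filter.Eventually.self_of_measure_singleton_ne_zero {α : Type*} [MeasurableSpace α]
    {μ : Measure α} {p : α → Prop} {a : α} (h : ∀ᵐ x ∂μ, p x) (ha : μ {a} ≠ 0) : p a := by
  by_contra hpa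
  exact ha (measure_mono_null (Set.singleton_subset_iff.2 hpa) (ae_iff.1 h))

theorem MeasureTheory.measure_singleton_ne_zero_of_ae_eq_zero_or_eq {α : Type*}
    [MeasurableSpace α] {μ : Measure α} {f : α → ℝ} {a : α} (h : ∀ᵐ x ∂μ, f x = 0 ∨ x = a)
    (hf : ∫ x, f x ∂μ ≠ 0) : μ {a} ≠ 0 := by
  intro ha
  refine hf (integral_eq_zero_of_ae ?_)
  filter_upwards [h, compl_mem_ae_iff.2 ha] with x hx hxa
  exact hx.resolve_right hxa

namespace IsPureState

variable {d : ℕ} {σ ρ : Matrix (Fin d) (Fin d) ℂ}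

theorem trace_conjTranspose_sub_mul_sub (hσ : IsPureState σ) (hρ : ρ.IsHermitian) :
    ((ρ - σ)ᴴ * (ρ - σ)).trace = (ρ * ρ).trace - 2 * (σ * ρ).trace + 1 := by
  obtain ⟨⟨hσpsd, hσtr⟩, hσσ, -⟩ := hσ
  rw [conjTranspose_sub, hρ.eq, hσpsd.1.eq, sub_mul, mul_sub, mul_sub, hσσ, trace_sub, trace_sub,
    trace_sub, hσtr, trace_mul_comm ρ σ]
  ring

theorem re_trace_conjTranspose_sub_mul_sub_le (hσ : IsPureState σ) (hρ : IsDensityMatrix ρ) :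
    ((ρ - σ)ᴴ * (ρ - σ)).trace.re ≤ 2 * (1 - (σ * ρ).trace.re) := by
  have hsq := Complex.re_le_re hρ.1.trace_mul_self_le_sq_trace
  rw [hρ.2] at hsq
  rw [trace_conjTranspose_sub_mul_sub hσ hρ.1.1]
  simp only [one_pow, Complex.one_re, Complex.add_re, Complex.sub_re, Complex.mul_re,
    Complex.re_ofNat, Complex.im_ofNat, zero_mul, sub_zero] at hsq ⊢
  linarith

theorem re_trace_mul_le_one (hσ : IsPureState σ) (hρ : IsDensityMatrix ρ) :
    (σ * ρ).trace.re ≤ 1 := by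
  have hdist := (posSemidef_conjTranspose_mul_self (ρ - σ)).trace_nonneg
  linarith [(Complex.nonneg_iff.1 hdist).1, hσ.re_trace_conjTranspose_sub_mul_sub_le hρ]

theorem eq_of_re_trace_mul_eq_one (hσ : IsPureState σ) (hρ : IsDensityMatrix ρ)
    (h : (σ * ρ).trace.re = 1) : ρ = σ := by
  obtain ⟨hre, him⟩ := Complex.nonneg_iff.1 (posSemidef_conjTranspose_mul_self (ρ - σ)).trace_nonneg
  rw [← sub_eq_zero, ← trace_conjTranspose_mul_self_eq_zero_iff]
  refine Complex.ext (le_antisymm ?_ hre) him.symm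
  simpa [h] using hσ.re_trace_conjTranspose_sub_mul_sub_le hρ

end IsPureState

section PosteriorMean

variable {d : ℕ} {π : Measure (Matrix (Fin d) (Fin d) ℂ)} {ℓ : Matrix (Fin d) (Fin d) ℂ → ℝ}

theorem integrable_trace_mul_smul (σ : Matrix (Fin d) (Fin d) ℂ)
    (hℓρ : ∀ i j, Integrable (fun ρ => ℓ ρ • ρ i j) π) :
    Integrable (fun ρ => (σ * (ℓ ρ • ρ)).trace) π := by
  simp only [trace, diag, mul_apply, Matrix.smul_apply]
  exact integrable_finsetSum _ fun i _ => integrable_finsetSum _ fun j _ => (hℓρ j i).const_mul _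

theorem integral_trace_mul_smul (σ : Matrix (Fin d) (Fin d) ℂ)
    (hℓρ : ∀ i j, Integrable (fun ρ => ℓ ρ • ρ i j) π) :
    ∫ ρ, (σ * (ℓ ρ • ρ)).trace ∂π = (σ * of fun i j => ∫ ρ, ℓ ρ • ρ i j ∂π).trace := calc
  _ = ∫ ρ, ∑ i, ∑ j, σ i j * (ℓ ρ • ρ j i) ∂π := by
    simp only [trace, diag, mul_apply, Matrix.smul_apply]
  _ = ∑ i, ∑ j, σ i j * ∫ ρ, ℓ ρ • ρ j i ∂π := by
    refine (integral_finsetSum _ fun i _ => integrable_finsetSum _ fun j _ =>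
      (hℓρ j i).const_mul _).trans (Finset.sum_congr rfl fun i _ => ?_)
    exact (integral_finsetSum _ fun j _ => (hℓρ j i).const_mul _).trans
      (Finset.sum_congr rfl fun j _ => integral_const_mul _ _)
  _ = _ := by simp only [trace, diag, mul_apply, of_apply]

theorem ae_eq_zero_or_eq_of_isPureState_posteriorMean {σ : Matrix (Fin d) (Fin d) ℂ}
    (hℓ : ∀ ρ, 0 ≤ ℓ ρ) (hπ : ∀ᵐ ρ ∂π, IsDensityMatrix ρ) (hℓint : Integrable ℓ π)
    (hℓρ : ∀ i j, Integrable (fun ρ => ℓ ρ • ρ i j) π)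
    (hσ : (of fun i j => ∫ ρ, ℓ ρ • ρ i j ∂π) = (∫ ρ, ℓ ρ ∂π) • σ) (hpure : IsPureState σ) :
    ∀ᵐ ρ ∂π, ℓ ρ = 0 ∨ ρ = σ := by
  have hre : ∀ ρ, (σ * (ℓ ρ • ρ)).trace.re = ℓ ρ * (σ * ρ).trace.re := fun ρ => by
    rw [Matrix.mul_smul, trace_smul, Complex.real_smul, Complex.re_ofReal_mul]
  have hdefect_nonneg : 0 ≤ᵐ[π] fun ρ => ℓ ρ * (1 - (σ * ρ).trace.re) := by
    filter_upwards [hπ] with ρ hρ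
    exact mul_nonneg (hℓ ρ) (sub_nonneg.2 (hpure.re_trace_mul_le_one hρ))
  have hre_int : Integrable (fun ρ => (σ * (ℓ ρ • ρ)).trace.re) π :=
    (integrable_trace_mul_smul σ hℓρ).re
  have hdefect_int : Integrable (fun ρ => ℓ ρ * (1 - (σ * ρ).trace.re)) π := by
    convert hℓint.sub hre_int using 1
    ext ρ
    rw [Pi.sub_apply, hre, mul_sub, mul_one]
  have hdefect_integral : ∫ ρ, ℓ ρ * (1 - (σ * ρ).trace.re) ∂π = 0 := by
    have hintegral_re := integral_re (integrable_trace_mul_smul σ hℓρ)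
    simp only [RCLike.re_to_complex] at hintegral_re
    simp only [mul_sub, mul_one, ← hre]
    rw [integral_sub hℓint hre_int, hintegral_re, integral_trace_mul_smul σ hℓρ, hσ,
      Matrix.mul_smul, trace_smul, hpure.2.1, hpure.1.2, Complex.real_smul, mul_one,
      Complex.ofReal_re, sub_self]
  filter_upwards [hπ, (integral_eq_zero_iff_of_nonneg_ae hdefect_nonneg hdefect_int).1
    hdefect_integral] with ρ hρ hdefect
  refine (mul_eq_zero.1 hdefect).imp_right fun h => hpure.eq_of_re_trace_mul_eq_one hρ ?_
  linarith

end PosteriorMean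

theorem bayes_two_pure_estimates_rule_out_each_other_general
    {d : ℕ} {𝒟 : Type*}
    (L : Matrix (Fin d) (Fin d) ℂ → 𝒟 → ℝ)
    (hLnonneg : ∀ ρ D, 0 ≤ L ρ D)
    (π : Measure (Matrix (Fin d) (Fin d) ℂ))
    (hπsupp : π {ρ | ¬ IsDensityMatrix ρ} = 0)
    (hLint : ∀ D, Integrable (fun ρ => L ρ D) π)
    (hLρint : ∀ (D : 𝒟) (i j : Fin d), Integrable (fun ρ => L ρ D • ρ i j) π)
    (Z : 𝒟 → ℝ) (hZ : ∀ D, Z D = ∫ ρ, L ρ D ∂π)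
    (ρhat : 𝒟 → Matrix (Fin d) (Fin d) ℂ)
    (hρhat : ∀ D, ρhat D = (Z D)⁻¹ • Matrix.of fun i j => ∫ ρ, L ρ D • ρ i j ∂π)
    (D₁ D₂ : 𝒟) (hZ₁ : 0 < Z D₁) (hZ₂ : 0 < Z D₂)
    (hpure₁ : IsPureState (ρhat D₁)) (hpure₂ : IsPureState (ρhat D₂))
    (hne : ρhat D₁ ≠ ρhat D₂) :
    L (ρhat D₂) D₁ = 0 ∧ L (ρhat D₁) D₂ = 0 := by
  have hconc : ∀ D, 0 < Z D → IsPureState (ρhat D) → ∀ᵐ ρ ∂π, L ρ D = 0 ∨ ρ = ρhat D :=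
    fun D hZD hpure => ae_eq_zero_or_eq_of_isPureState_posteriorMean (hLnonneg · D)
      (ae_iff.2 hπsupp) (hLint D) (hLρint D)
      (by rw [hρhat D, smul_smul, ← hZ D, mul_inv_cancel₀ hZD.ne', one_smul]) hpure
  have hatom : ∀ D, 0 < Z D → IsPureState (ρhat D) → π {ρhat D} ≠ 0 := fun D hZD hpure =>
    measure_singleton_ne_zero_of_ae_eq_zero_or_eq (hconc D hZD hpure) (hZ D ▸ hZD.ne')
  exact ⟨((hconc D₁ hZ₁ hpure₁).self_of_measure_singleton_ne_zero
      (hatom D₂ hZ₂ hpure₂)).resolve_right hne.symm,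
    ((hconc D₂ hZ₂ hpure₂).self_of_measure_singleton_ne_zero
      (hatom D₁ hZ₁ hpure₁)).resolve_right hne⟩

/-- A posterior-mean (Bayes) estimator cannot report two distinct pure
states `σ₁ = ρ̂(D₁)` and `σ₂ = ρ̂(D₂)` unless each dataset assigns zero likelihood to the
other's estimate: `L(σ₂, D₁) = 0` and `L(σ₁, D₂) = 0`. -/
theorem bayes_two_pure_estimates_rule_out_each_other
    {d : ℕ} {𝒟 : Type*} [Fintype 𝒟] [Nonempty 𝒟]
    (L : Matrix (Fin d) (Fin d) ℂ → 𝒟 → ℝ)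
    (hLmeas : ∀ D, Measurable fun ρ => L ρ D)
    (hLnonneg : ∀ ρ D, 0 ≤ L ρ D)
    (π : Measure (Matrix (Fin d) (Fin d) ℂ)) [IsProbabilityMeasure π]
    (hπsupp : π {ρ | ¬ IsDensityMatrix ρ} = 0)
    (hLint : ∀ D, Integrable (fun ρ => L ρ D) π)
    (hLρint : ∀ (D : 𝒟) (i j : Fin d), Integrable (fun ρ => L ρ D • ρ i j) π)
    (Z : 𝒟 → ℝ) (hZ : ∀ D, Z D = ∫ ρ, L ρ D ∂π)
    (ρhat : 𝒟 → Matrix (Fin d) (Fin d) ℂ)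
    (hρhat : ∀ D, ρhat D = (Z D)⁻¹ • Matrix.of fun i j => ∫ ρ, L ρ D • ρ i j ∂π)
    (D₁ D₂ : 𝒟) (hZ₁ : 0 < Z D₁) (hZ₂ : 0 < Z D₂)
    (hpure₁ : IsPureState (ρhat D₁)) (hpure₂ : IsPureState (ρhat D₂))
    (hne : ρhat D₁ ≠ ρhat D₂) :
    L (ρhat D₂) D₁ = 0 ∧ L (ρhat D₁) D₂ = 0 :=
  bayes_two_pure_estimates_rule_out_each_other_general L hLnonneg π hπsupp hLint hLρint Z hZ ρhat
    hρhat D₁ D₂ hZ₁ hZ₂ hpure₁ hpure₂ hne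
end

section
/- For any two density matrices ρ and σ of dimension 2 (single-qubit states), the squared root-fidelity satisfies (Tr √(√ρ σ √ρ))² = Tr(ρ σ) + 2·√(det ρ · det σ). -/
/-! For a 2 × 2 matrix `S`, Cayley–Hamilton gives `(Tr S)² = Tr (S S) + 2 det S`. Applied to
`S = √M` with `M = √ρ σ √ρ` positive semidefinite, this reads
`(Tr √M)² = Tr M + 2 √(det M)`, and `Tr M = Tr (ρ σ)` by cyclicity of the trace while
`det M = det ρ · det σ`. The square root `psqrt` coincides with the continuous functional
calculus square root `CFC.sqrt`, whose library API provides `√M ≥ 0`, `√M √M = M` and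
`det √M = √(det M)`. -/

open Matrix MeasureTheory
open scoped ComplexOrder Classical

/-- The positive semidefinite square root `√A` of a positive semidefinite matrix,
extended to a total function (junk value `0` on non-PSD matrices). -/
noncomputable def psqrt {d : ℕ} (A : Matrix (Fin d) (Fin d) ℂ) :
    Matrix (Fin d) (Fin d) ℂ :=
  if h : A.PosSemidef then
    h.1.eigenvectorUnitary.1 * diagonal ((↑) ∘ Real.sqrt ∘ h.1.eigenvalues) *
      (star h.1.eigenvectorUnitary : Matrix (Fin d) (Fin d) ℂ) else 0

/-- The root fidelity `√F(ρ,σ) = Tr √(√ρ σ √ρ)` (a real number, taken as the real part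
of the trace, which is real for density matrices). -/
noncomputable def rootFidelity {d : ℕ} (ρ σ : Matrix (Fin d) (Fin d) ℂ) : ℝ :=
  ((psqrt (psqrt ρ * σ * psqrt ρ)).trace).re

open scoped MatrixOrder

lemma Complex.re_mul_of_im_eq_zero {z w : ℂ} (hz : z.im = 0) : (z * w).re = z.re * w.re := by
  rw [Complex.mul_re, hz, zero_mul, sub_zero]

theorem Matrix.trace_sq_fin_two {R : Type*} [CommRing R] (A : Matrix (Fin 2) (Fin 2) R) :
    A.trace ^ 2 = (A * A).trace + 2 * A.det := by
  simp only [trace_fin_two, det_fin_two, mul_apply, Fin.sum_univ_two]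
  ring

lemma psqrt_eq_sqrt {d : ℕ} {A : Matrix (Fin d) (Fin d) ℂ} (hA : A.PosSemidef) :
    psqrt A = CFC.sqrt A := by
  rw [CFC.sqrt_eq_real_sqrt A hA.nonneg, cfcₙ_eq_cfc, hA.1.cfc_eq, psqrt, dif_pos hA]
  rfl

lemma re_trace_sqrt_sq_fin_two {A : Matrix (Fin 2) (Fin 2) ℂ} (hA : A.PosSemidef) :
    (CFC.sqrt A).trace.re ^ 2 = A.trace.re + 2 * √A.det.re := by
  have key := (CFC.sqrt A).trace_sq_fin_two
  rw [CFC.sqrt_mul_sqrt_self A hA.nonneg, hA.det_sqrt, RCLike.sqrt_of_nonneg hA.det_nonneg] at key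
  have htrace_real : (CFC.sqrt A).trace.im = 0 :=
    (Complex.nonneg_iff.mp (CFC.sqrt_nonneg A).posSemidef.trace_nonneg).2.symm
  simpa [sq, Complex.re_mul_of_im_eq_zero htrace_real] using congrArg Complex.re key

/-- For any two single-qubit density matrices `ρ, σ`, the squared
root-fidelity satisfies `(Tr √(√ρ σ √ρ))² = Tr(ρσ) + 2 √(det ρ · det σ)`. -/
theorem rootFidelity_sq_qubit (ρ σ : Matrix (Fin 2) (Fin 2) ℂ)
    (hρ : IsDensityMatrix ρ) (hσ : IsDensityMatrix σ) :
    (rootFidelity ρ σ) ^ 2 = ((ρ * σ).trace).re + 2 * Real.sqrt (ρ.det.re * σ.det.re) := by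
  set S := CFC.sqrt ρ
  have hSS : S * S = ρ := CFC.sqrt_mul_sqrt_self ρ hρ.1.nonneg
  have hM : (S * σ * S).PosSemidef :=
    (conjugate_nonneg_of_nonneg hσ.1.nonneg (CFC.sqrt_nonneg ρ)).posSemidef
  have htrace : (S * σ * S).trace = (ρ * σ).trace := by rw [trace_mul_cycle, hSS]
  have hdet : (S * σ * S).det = ρ.det * σ.det := by
    rw [← hSS, det_mul, det_mul, det_mul]
    ring
  have hdetρ_real : ρ.det.im = 0 := (Complex.nonneg_iff.mp hρ.1.det_nonneg).2.symm
  rw [rootFidelity, psqrt_eq_sqrt hρ.1, psqrt_eq_sqrt hM, re_trace_sqrt_sq_fin_two hM, htrace,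
    hdet, Complex.re_mul_of_im_eq_zero hdetρ_real]
end

section
/- Let E be a finite-dimensional real inner product space, U ⊆ E an open convex set, and f : U → ℝ a differentiable strictly convex function; define the Bregman divergence D_f(x, y) = f(x) − f(y) − ⟨∇f(y), x − y⟩ for x, y ∈ U. Let μ be a Borel probability measure on U such that f is μ-integrable and the mean m = ∫ x dμ(x) lies in U. Then for every y ∈ U, ∫ D_f(x, y) dμ(x) ≥ ∫ D_f(x, m) dμ(x), with equality if and only if y = m. (In words: the mean of the distribution is the unique minimizer of expected Bregman-divergence loss, i.e., the Bayes estimator for any Bregman divergence is the posterior mean.) -/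
/-!
Integrating the Bregman divergence kills its linear part exactly, which gives the compensation
identity `∫ D(x, y) dμ - ∫ D(x, m) dμ = D(m, y)`. For `y ≠ m` the right-hand side is positive:
restricted to the segment from `y` to `m`, `f` is a strictly convex function of one variable,
whose secant slopes strictly exceed its derivative.
-/

open MeasureTheory
open scoped RealInnerProductSpace

theorem StrictConvexOn.comp_affineMap {𝕜 E F β : Type*} [Field 𝕜] [LinearOrder 𝕜]
    [AddCommGroup E] [AddCommGroup F] [AddCommMonoid β] [PartialOrder β]
    [Module 𝕜 E] [Module 𝕜 F] [SMul 𝕜 β] {f : F → β} {s : Set F}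
    (hf : StrictConvexOn 𝕜 s f) (g : E →ᵃ[𝕜] F) (hg : Function.Injective g) :
    StrictConvexOn 𝕜 (g ⁻¹' s) (f ∘ g) :=
  ⟨hf.1.affine_preimage _, fun x hx y hy hxy a b ha hb hab =>
    calc
      (f ∘ g) (a • x + b • y) = f (a • g x + b • g y) := by
        rw [Function.comp_apply, Convex.combo_affine_apply hab]
      _ < a • f (g x) + b • f (g y) := hf.2 hx hy (hg.ne hxy) ha hb hab⟩

theorem StrictConvexOn.add_fderiv_lt {E : Type*} [NormedAddCommGroup E] [NormedSpace ℝ E]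
    {U : Set E} {f : E → ℝ} (hf : StrictConvexOn ℝ U f) {x y : E} (hx : x ∈ U) (hy : y ∈ U)
    (hxy : x ≠ y) (hfx : DifferentiableAt ℝ f x) :
    f x + fderiv ℝ f x (y - x) < f y := by
  set L : ℝ →ᵃ[ℝ] E := AffineMap.lineMap x y
  have hline : StrictConvexOn ℝ (L ⁻¹' U) (f ∘ L) :=
    hf.comp_affineMap L (AffineMap.lineMap_injective ℝ hxy)
  have hderiv : HasDerivAt (f ∘ L) (fderiv ℝ f x (y - x)) 0 := by
    have hL0 : L 0 = x := AffineMap.lineMap_apply_zero x y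
    have hfL : HasFDerivAt f (fderiv ℝ f x) (L 0) := hL0 ▸ hfx.hasFDerivAt
    exact hfL.comp_hasDerivAt 0 AffineMap.hasDerivAt_lineMap
  have := hline.lt_slope_of_hasDerivAt (by simpa [L]) (by simpa [L]) one_pos hderiv
  simpa [L, slope_def_field, lt_sub_iff_add_lt'] using this

section Bregman

variable {E : Type*} [NormedAddCommGroup E] [InnerProductSpace ℝ E] [CompleteSpace E]

noncomputable def bregmanDiv (f : E → ℝ) (x y : E) : ℝ :=
  f x - f y - ⟪gradient f y, x - y⟫

@[simp]
theorem bregmanDiv_self (f : E → ℝ) (x : E) : bregmanDiv f x x = 0 := by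
  simp [bregmanDiv]

theorem StrictConvexOn.bregmanDiv_pos {U : Set E} {f : E → ℝ} (hf : StrictConvexOn ℝ U f)
    {x y : E} (hx : x ∈ U) (hy : y ∈ U) (hxy : x ≠ y) (hfy : DifferentiableAt ℝ f y) :
    0 < bregmanDiv f x y := by
  have := hf.add_fderiv_lt hy hx hxy.symm hfy
  rw [bregmanDiv, inner_gradient_left]
  linarith

variable [MeasurableSpace E] {μ : Measure E} [IsProbabilityMeasure μ] {f : E → ℝ}

theorem integral_bregmanDiv (hf : Integrable f μ) (hid : Integrable id μ) (y : E) :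
    ∫ x, bregmanDiv f x y ∂μ = ∫ x, f x ∂μ - f y - ⟪gradient f y, (∫ x, x ∂μ) - y⟫ := by
  have hf' : Integrable (fun x => f x - f y) μ := hf.sub (integrable_const _)
  have hinner : Integrable (fun x => ⟪gradient f y, x⟫) μ := hid.const_inner _
  have hinner' : Integrable (fun x => ⟪gradient f y, x⟫ - ⟪gradient f y, y⟫) μ :=
    hinner.sub (integrable_const _)
  simp only [bregmanDiv, inner_sub_right]
  rw [integral_sub hf' hinner', integral_sub hf (integrable_const _),
    integral_sub hinner (integrable_const _), integral_inner (f := fun x => x) hid]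
  simp

theorem integral_bregmanDiv_sub_integral_bregmanDiv_mean (hf : Integrable f μ)
    (hid : Integrable id μ) (y : E) :
    ∫ x, bregmanDiv f x y ∂μ - ∫ x, bregmanDiv f x (∫ x, x ∂μ) ∂μ =
      bregmanDiv f (∫ x, x ∂μ) y := by
  rw [integral_bregmanDiv hf hid, integral_bregmanDiv hf hid, bregmanDiv]
  simp only [sub_self, inner_zero_right]
  ring

end Bregman

theorem bregman_bayes_estimator_is_mean_general
    {E : Type*} [NormedAddCommGroup E] [InnerProductSpace ℝ E] [FiniteDimensional ℝ E]
    [MeasurableSpace E]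
    (U : Set E)
    (f : E → ℝ) (hfdiff : ∀ x ∈ U, DifferentiableAt ℝ f x)
    (hfconv : StrictConvexOn ℝ U f)
    (D : E → E → ℝ)
    (hD : ∀ x y, D x y = f x - f y - ⟪gradient f y, x - y⟫)
    (μ : Measure E) [IsProbabilityMeasure μ]
    (hfint : Integrable f μ) (hidint : Integrable id μ)
    (m : E) (hm : m = ∫ x, x ∂μ) (hmU : m ∈ U) :
    ∀ y ∈ U, (∫ x, D x m ∂μ) ≤ (∫ x, D x y ∂μ) ∧
      ((∫ x, D x y ∂μ) = (∫ x, D x m ∂μ) ↔ y = m) := by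
  obtain rfl : D = bregmanDiv f := funext₂ hD
  have hgap : ∀ y ∈ U, y ≠ m → ∫ x, bregmanDiv f x m ∂μ < ∫ x, bregmanDiv f x y ∂μ := by
    intro y hy hym
    have hpos := hfconv.bregmanDiv_pos hmU hy hym.symm (hfdiff y hy)
    have hsplit := integral_bregmanDiv_sub_integral_bregmanDiv_mean hfint hidint y
    rw [← hm] at hsplit
    linarith
  intro y hy
  rcases eq_or_ne y m with rfl | hym
  · simp
  · exact ⟨(hgap y hy hym).le, iff_of_false (hgap y hy hym).ne' hym⟩

/-- Let `f` be a differentiable strictly convex function on an open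
convex subset `U` of a finite-dimensional real inner product space, with Bregman
divergence `D_f(x, y) = f(x) − f(y) − ⟪∇f(y), x − y⟫`. If `μ` is a Borel probability
measure on `U` with `f` integrable and mean `m = ∫ x dμ(x) ∈ U`, then for every `y ∈ U`,
`∫ D_f(x, y) dμ(x) ≥ ∫ D_f(x, m) dμ(x)`, with equality iff `y = m`: the mean is the
unique minimizer of expected Bregman loss. -/
theorem bregman_bayes_estimator_is_mean
    {E : Type*} [NormedAddCommGroup E] [InnerProductSpace ℝ E] [FiniteDimensional ℝ E]
    [MeasurableSpace E] [BorelSpace E]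
    (U : Set E) (hUopen : IsOpen U) (hUconv : Convex ℝ U)
    (f : E → ℝ) (hfdiff : ∀ x ∈ U, DifferentiableAt ℝ f x)
    (hfconv : StrictConvexOn ℝ U f)
    (D : E → E → ℝ)
    (hD : ∀ x y, D x y = f x - f y - ⟪gradient f y, x - y⟫)
    (μ : Measure E) [IsProbabilityMeasure μ] (hμU : μ Uᶜ = 0)
    (hfint : Integrable f μ) (hidint : Integrable id μ)
    (m : E) (hm : m = ∫ x, x ∂μ) (hmU : m ∈ U) :
    ∀ y ∈ U, (∫ x, D x m ∂μ) ≤ (∫ x, D x y ∂μ) ∧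
      ((∫ x, D x y ∂μ) = (∫ x, D x m ∂μ) ↔ y = m) :=
  bregman_bayes_estimator_is_mean_general U f hfdiff hfconv D hD μ hfint hidint m hm hmU
end

section
/- Let μ be a Borel probability measure supported on a compact set of positive definite density matrices of dimension d, and let ρ̄ = ∫ ρ dμ(ρ) be its mean (which is then a positive definite density matrix). Then for every positive definite density matrix σ, the expected quantum relative entropy satisfies ∫ Tr(ρ·(log ρ − log σ)) dμ(ρ) ≥ ∫ Tr(ρ·(log ρ − log ρ̄)) dμ(ρ), with equality if and only if σ = ρ̄. (In words: the posterior mean is the unique Bayes estimator for quantum relative entropy loss.) -/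
open Matrix MeasureTheory
open scoped ComplexOrder Classical

/-- The matrix logarithm, defined by applying `Real.log` to the eigenvalues in the
spectral decomposition (continuous functional calculus) of a Hermitian matrix
(junk value `0` on non-Hermitian matrices). -/
noncomputable def matLog {d : ℕ} (A : Matrix (Fin d) (Fin d) ℂ) :
    Matrix (Fin d) (Fin d) ℂ :=
  if h : A.IsHermitian then h.cfc Real.log else 0

/-!
Write `D(ρ, σ) = Tr(ρ (log ρ - log σ))` and `ρ̄` for the mean of `μ`. Since `ρ ↦ Tr(ρ log τ)` is
linear, averaging gives `∫ D(ρ, σ) dμ = ∫ D(ρ, ρ̄) dμ + D(ρ̄, σ)`, and the theorem reduces to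
Klein's inequality: `D(ρ̄, σ) ≥ 0`, with equality only for `σ = ρ̄`.

For Klein's inequality write `ρ = ∑ pᵢ uᵢuᵢ*` and `σ = ∑ qⱼ vⱼvⱼ*`. The weights
`cᵢⱼ = |⟨uᵢ, vⱼ⟩|²` form a doubly stochastic matrix, so when `Tr ρ = Tr σ`,
`D(ρ, σ) = ∑ cᵢⱼ qⱼ klFun (pᵢ / qⱼ)` with `klFun x = x log x + 1 - x ≥ 0`. All terms vanish only if
`pᵢ = qⱼ` whenever `cᵢⱼ ≠ 0`, i.e. if `diag p · W = W · diag q` for the unitary `W` with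
entries `⟨uᵢ, vⱼ⟩`, which forces `ρ = σ`.

Integrability of `ρ ↦ Tr(ρ log ρ) = Tr(f(ρ))`, `f x = x log x`, comes from continuity of the
functional calculus on the compact support, the spectra lying in `[0, 1]`.
-/

open InformationTheory

lemma mul_klFun_div {p q : ℝ} (hp : 0 < p) (hq : 0 < q) :
    q * klFun (p / q) = p * Real.log p - p * Real.log q + q - p := by
  rw [klFun, Real.log_div hp.ne' hq.ne']
  field_simp

namespace Matrix

variable {n : Type*} [Fintype n]

lemma star_dotProduct_mulVec_eq_trace_mul_vecMulVec (A : Matrix n n ℂ) (x : n → ℂ) :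
    star x ⬝ᵥ A *ᵥ x = (A * vecMulVec x (star x)).trace := by
  simp only [dotProduct, mulVec, trace, diag, mul_apply, vecMulVec_apply, Finset.mul_sum]
  exact Finset.sum_congr rfl fun i _ => Finset.sum_congr rfl fun j _ => by ring

variable [DecidableEq n]

lemma normSq_apply_mem_doublyStochastic {W : Matrix n n ℂ} (hW : W ∈ unitaryGroup n ℂ) :
    (of fun i j => Complex.normSq (W i j)) ∈ doublyStochastic ℝ n := by
  refine mem_doublyStochastic_iff_sum.2
    ⟨fun i j => Complex.normSq_nonneg _, fun i => ?_, fun j => ?_⟩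
  · have h := congr_fun₂ (mem_unitaryGroup_iff.1 hW) i i
    simp only [mul_apply, star_apply, one_apply_eq, Complex.star_def, Complex.mul_conj] at h
    exact_mod_cast h
  · have h := congr_fun₂ (mem_unitaryGroup_iff'.1 hW) j j
    simp only [mul_apply, star_apply, one_apply_eq, Complex.star_def, mul_comm _ (W _ j),
      Complex.mul_conj] at h
    exact_mod_cast h

lemma trace_conj_diagonal_mul_conj_diagonal (U V : Matrix n n ℂ) (a b : n → ℝ) :
    ((U * diagonal (fun i => (a i : ℂ)) * star U) *
        (V * diagonal (fun j => (b j : ℂ)) * star V)).trace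
      = ((∑ i, ∑ j, Complex.normSq ((star U * V) i j) * a i * b j : ℝ) : ℂ) := by
  have hcycle : ((U * diagonal (fun i => (a i : ℂ)) * star U) *
        (V * diagonal (fun j => (b j : ℂ)) * star V)).trace
      = (diagonal (fun i => (a i : ℂ)) * (star U * V) * diagonal (fun j => (b j : ℂ)) *
          star (star U * V)).trace := by
    rw [star_mul, star_star]
    simp only [mul_assoc]
    rw [trace_mul_comm U]
    simp only [mul_assoc]
  rw [hcycle]
  push_cast
  simp only [trace, diag, mul_apply, diagonal_apply, star_apply, ite_mul, zero_mul, mul_ite,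
    mul_zero, Finset.sum_ite_eq, Finset.sum_ite_eq', Finset.mem_univ, if_true, Complex.star_def]
  refine Finset.sum_congr rfl fun i _ => Finset.sum_congr rfl fun j _ => ?_
  rw [← Complex.mul_conj]
  ring

end Matrix

namespace Matrix.IsHermitian

variable {n : Type*} [Fintype n] [DecidableEq n] {A B : Matrix n n ℂ}

noncomputable def eigenOverlap (hA : A.IsHermitian) (hB : B.IsHermitian) : Matrix n n ℝ :=
  of fun i j => Complex.normSq
    ((star (hA.eigenvectorUnitary : Matrix n n ℂ) * hB.eigenvectorUnitary) i j)

lemma eigenOverlap_mem_doublyStochastic (hA : A.IsHermitian) (hB : B.IsHermitian) :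
    hA.eigenOverlap hB ∈ doublyStochastic ℝ n :=
  normSq_apply_mem_doublyStochastic (star hA.eigenvectorUnitary * hB.eigenvectorUnitary).2

lemma eigenOverlap_self (hA : A.IsHermitian) : hA.eigenOverlap hA = 1 := by
  ext i j
  rw [eigenOverlap, of_apply, mem_unitaryGroup_iff'.1 hA.eigenvectorUnitary.2, one_apply,
    one_apply]
  split_ifs <;> simp

lemma cfc_eq_mul_diagonal_mul_star (hA : A.IsHermitian) (f : ℝ → ℝ) :
    hA.cfc f = (hA.eigenvectorUnitary : Matrix n n ℂ) *
      diagonal (fun i => (f (hA.eigenvalues i) : ℂ)) *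
      star (hA.eigenvectorUnitary : Matrix n n ℂ) :=
  rfl

lemma cfc_id_eq (hA : A.IsHermitian) : hA.cfc id = A := by
  rw [← hA.cfc_eq, cfc_id ℝ A]

lemma re_trace_cfc_mul_cfc (hA : A.IsHermitian) (hB : B.IsHermitian) (f g : ℝ → ℝ) :
    (hA.cfc f * hB.cfc g).trace.re =
      ∑ i, ∑ j, hA.eigenOverlap hB i j * f (hA.eigenvalues i) * g (hB.eigenvalues j) := by
  rw [cfc_eq_mul_diagonal_mul_star, cfc_eq_mul_diagonal_mul_star,
    trace_conj_diagonal_mul_conj_diagonal, Complex.ofReal_re]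
  rfl

lemma eq_of_eigenOverlap_ne_zero (hA : A.IsHermitian) (hB : B.IsHermitian)
    (h : ∀ i j, hA.eigenOverlap hB i j ≠ 0 → hA.eigenvalues i = hB.eigenvalues j) : A = B := by
  set U : Matrix n n ℂ := ↑hA.eigenvectorUnitary
  set V : Matrix n n ℂ := ↑hB.eigenvectorUnitary
  set a : n → ℂ := fun i => ((hA.eigenvalues i : ℝ) : ℂ)
  set b : n → ℂ := fun j => ((hB.eigenvalues j : ℝ) : ℂ)
  have hUU : U * star U = 1 := mem_unitaryGroup_iff.1 hA.eigenvectorUnitary.2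
  have hVV : V * star V = 1 := mem_unitaryGroup_iff.1 hB.eigenvectorUnitary.2
  have hcomm : diagonal a * (star U * V) = (star U * V) * diagonal b := by
    ext i j
    rw [diagonal_mul, mul_diagonal]
    by_cases hW : (star U * V) i j = 0
    · simp [hW]
    · simp only [a, b, h i j (by simpa [eigenOverlap] using hW), mul_comm]
  calc A = U * diagonal a * star U := by
        rw [← hA.cfc_id_eq, cfc_eq_mul_diagonal_mul_star]; rfl
    _ = U * (diagonal a * (star U * V)) * star V := by
        simp only [mul_assoc, hVV, mul_one]
    _ = (U * star U) * (V * diagonal b * star V) := by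
        rw [hcomm]; simp only [mul_assoc]
    _ = B := by
        rw [hUU, one_mul, ← hB.cfc_id_eq, cfc_eq_mul_diagonal_mul_star]; rfl

end Matrix.IsHermitian

lemma integrable_of_continuousOn_of_ae_mem {X E : Type*} [TopologicalSpace X] [T2Space X]
    [MeasurableSpace X] [OpensMeasurableSpace X] [NormedAddCommGroup E]
    {μ : Measure X} [IsFiniteMeasure μ] {K : Set X} (hK : IsCompact K)
    (hμK : ∀ᵐ x ∂μ, x ∈ K) {f : X → E} (hf : ContinuousOn f K) : Integrable f μ :=
  (hf.integrableOn_compact hK).integrable_of_ae_notMem_eq_zero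
    (hμK.mono fun _ hx hx' => absurd hx hx')

section Mean

variable {n : Type*} [MeasurableSpace (Matrix n n ℂ)]

noncomputable def matrixMean (μ : Measure (Matrix n n ℂ)) : Matrix n n ℂ :=
  of fun i j => ∫ ρ, ρ i j ∂μ

variable {μ : Measure (Matrix n n ℂ)}

lemma isHermitian_matrixMean (h : ∀ᵐ ρ ∂μ, ρ.IsHermitian) : (matrixMean μ).IsHermitian := by
  ext i j
  rw [conjTranspose_apply, matrixMean, of_apply, of_apply, Complex.star_def, ← integral_conj]
  exact integral_congr_ae (h.mono fun ρ hρ => congr_fun₂ hρ i j)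

variable [Fintype n]

lemma integrable_trace_mul (hint : ∀ i j, Integrable (fun ρ : Matrix n n ℂ => ρ i j) μ)
    (B : Matrix n n ℂ) : Integrable (fun ρ => (ρ * B).trace) μ := by
  simp only [trace, diag, mul_apply]
  exact integrable_finsetSum _ fun i _ => integrable_finsetSum _ fun j _ => (hint i j).mul_const _

lemma trace_matrixMean_mul (hint : ∀ i j, Integrable (fun ρ : Matrix n n ℂ => ρ i j) μ)
    (B : Matrix n n ℂ) : (matrixMean μ * B).trace = ∫ ρ, (ρ * B).trace ∂μ := by
  simp only [trace, diag, mul_apply, matrixMean, of_apply]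
  rw [integral_finsetSum _ fun i _ =>
    integrable_finsetSum _ fun j _ => (hint i j).mul_const _]
  refine Finset.sum_congr rfl fun i _ => ?_
  rw [integral_finsetSum _ fun j _ => (hint i j).mul_const _]
  simp only [integral_mul_const]

lemma re_trace_matrixMean_mul (hint : ∀ i j, Integrable (fun ρ : Matrix n n ℂ => ρ i j) μ)
    (B : Matrix n n ℂ) : (matrixMean μ * B).trace.re = ∫ ρ, (ρ * B).trace.re ∂μ := by
  rw [trace_matrixMean_mul hint]
  exact (integral_re (integrable_trace_mul hint B)).symm

lemma trace_matrixMean [IsProbabilityMeasure μ]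
    (hint : ∀ i j, Integrable (fun ρ : Matrix n n ℂ => ρ i j) μ) (h : ∀ᵐ ρ ∂μ, ρ.trace = 1) :
    (matrixMean μ).trace = 1 := by
  have hmean : (matrixMean μ).trace = ∫ ρ, ρ.trace ∂μ := by
    simp only [trace, diag, matrixMean, of_apply]
    exact (integral_finsetSum _ fun i _ => hint i i).symm
  rw [hmean, integral_congr_ae h]
  simp

lemma posDef_matrixMean [NeZero μ]
    (hint : ∀ i j, Integrable (fun ρ : Matrix n n ℂ => ρ i j) μ) (h : ∀ᵐ ρ ∂μ, ρ.PosDef) :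
    (matrixMean μ).PosDef := by
  have hherm := isHermitian_matrixMean (h.mono fun ρ hρ => hρ.1)
  refine .of_dotProduct_mulVec_pos hherm fun x hx =>
    RCLike.pos_iff.2 ⟨?_, hherm.im_star_dotProduct_mulVec_self x⟩
  have hpos : ∀ᵐ ρ ∂μ, 0 < (ρ * vecMulVec x (star x)).trace.re := h.mono fun ρ hρ => by
    simpa [star_dotProduct_mulVec_eq_trace_mul_vecMulVec] using hρ.re_dotProduct_pos hx
  simp only [RCLike.re_to_complex, star_dotProduct_mulVec_eq_trace_mul_vecMulVec,
    re_trace_matrixMean_mul hint]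
  refine (integral_pos_iff_support_of_nonneg_ae (hpos.mono fun ρ hρ => hρ.le)
    (integrable_trace_mul hint _).re).2 ?_
  have hsupp : ∀ᵐ ρ ∂μ, ρ ∈ Function.support fun ρ : Matrix n n ℂ =>
      (ρ * vecMulVec x (star x)).trace.re := hpos.mono fun ρ hρ => hρ.ne'
  rw [measure_congr (ae_eq_univ.2 (ae_iff.1 hsupp)), Measure.measure_univ_pos]
  exact NeZero.ne μ

end Mean

section QuantumRelativeEntropy

variable {d : ℕ}

noncomputable def qRelEntropy (ρ σ : Matrix (Fin d) (Fin d) ℂ) : ℝ :=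
  ((ρ * (matLog ρ - matLog σ)).trace).re

lemma matLog_eq_cfc {A : Matrix (Fin d) (Fin d) ℂ} (hA : A.IsHermitian) :
    matLog A = hA.cfc Real.log :=
  dif_pos hA

lemma qRelEntropy_eq_sum {ρ σ : Matrix (Fin d) (Fin d) ℂ} (hρ : ρ.IsHermitian)
    (hσ : σ.IsHermitian) :
    qRelEntropy ρ σ = ∑ i, ∑ j, hρ.eigenOverlap hσ i j *
      (hρ.eigenvalues i * Real.log (hρ.eigenvalues i) -
        hρ.eigenvalues i * Real.log (hσ.eigenvalues j)) := by
  have hself : (ρ * matLog ρ).trace.re =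
      ∑ i, ∑ j, hρ.eigenOverlap hσ i j * (hρ.eigenvalues i * Real.log (hρ.eigenvalues i)) := by
    have h := hρ.re_trace_cfc_mul_cfc hρ id Real.log
    rw [hρ.cfc_id_eq, ← matLog_eq_cfc, hρ.eigenOverlap_self] at h
    simp only [h, Matrix.one_apply, ite_mul, one_mul, zero_mul, Finset.sum_ite_eq, Finset.mem_univ,
      if_true, id, ← Finset.sum_mul,
      sum_row_of_mem_doublyStochastic (hρ.eigenOverlap_mem_doublyStochastic hσ)]
  have hcross : (ρ * matLog σ).trace.re =
      ∑ i, ∑ j, hρ.eigenOverlap hσ i j * (hρ.eigenvalues i * Real.log (hσ.eigenvalues j)) := by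
    have h := hρ.re_trace_cfc_mul_cfc hσ id Real.log
    rw [hρ.cfc_id_eq, ← matLog_eq_cfc] at h
    simp only [h, id, mul_assoc]
  simp only [qRelEntropy, mul_sub, Matrix.trace_sub, Complex.sub_re, hself, hcross,
    ← Finset.sum_sub_distrib]

lemma qRelEntropy_eq_sum_klFun {ρ σ : Matrix (Fin d) (Fin d) ℂ} (hρ : ρ.PosDef) (hσ : σ.PosDef)
    (htr : ρ.trace = σ.trace) :
    qRelEntropy ρ σ = ∑ i, ∑ j, hρ.1.eigenOverlap hσ.1 i j *
      (hσ.1.eigenvalues j * klFun (hρ.1.eigenvalues i / hσ.1.eigenvalues j)) := by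
  set c := hρ.1.eigenOverlap hσ.1
  set p := hρ.1.eigenvalues
  set q := hσ.1.eigenvalues
  have hc : c ∈ doublyStochastic ℝ (Fin d) := hρ.1.eigenOverlap_mem_doublyStochastic hσ.1
  have hpq : ∑ i, p i = ∑ j, q j := by
    simpa [hρ.1.trace_eq_sum_eigenvalues, hσ.1.trace_eq_sum_eigenvalues] using
      congrArg Complex.re htr
  have hbalance : ∑ i, ∑ j, c i j * (q j - p i) = 0 := by
    rw [← sub_eq_zero.2 hpq.symm]
    simp only [mul_sub, Finset.sum_sub_distrib, ← Finset.sum_mul,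
      sum_row_of_mem_doublyStochastic hc, one_mul]
    rw [Finset.sum_comm]
    simp only [← Finset.sum_mul, sum_col_of_mem_doublyStochastic hc, one_mul]
  rw [qRelEntropy_eq_sum hρ.1 hσ.1, ← add_zero (∑ i, _), ← hbalance]
  simp only [← Finset.sum_add_distrib]
  refine Finset.sum_congr rfl fun i _ => Finset.sum_congr rfl fun j _ => ?_
  rw [mul_klFun_div (hρ.eigenvalues_pos i) (hσ.eigenvalues_pos j)]
  ring

variable {ρ σ : Matrix (Fin d) (Fin d) ℂ}

lemma eigenOverlap_mul_klFun_nonneg (hρ : ρ.PosDef) (hσ : σ.PosDef) (i j : Fin d) :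
    0 ≤ hρ.1.eigenOverlap hσ.1 i j *
      (hσ.1.eigenvalues j * klFun (hρ.1.eigenvalues i / hσ.1.eigenvalues j)) :=
  mul_nonneg (nonneg_of_mem_doublyStochastic (hρ.1.eigenOverlap_mem_doublyStochastic hσ.1))
    (mul_nonneg (hσ.eigenvalues_pos j).le
      (klFun_nonneg (div_pos (hρ.eigenvalues_pos i) (hσ.eigenvalues_pos j)).le))

theorem qRelEntropy_nonneg (hρ : ρ.PosDef) (hσ : σ.PosDef) (htr : ρ.trace = σ.trace) :
    0 ≤ qRelEntropy ρ σ := by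
  rw [qRelEntropy_eq_sum_klFun hρ hσ htr]
  exact Finset.sum_nonneg fun i _ => Finset.sum_nonneg fun j _ =>
    eigenOverlap_mul_klFun_nonneg hρ hσ i j

theorem qRelEntropy_eq_zero_iff (hρ : ρ.PosDef) (hσ : σ.PosDef) (htr : ρ.trace = σ.trace) :
    qRelEntropy ρ σ = 0 ↔ ρ = σ := by
  refine ⟨fun h => hρ.1.eq_of_eigenOverlap_ne_zero hσ.1 fun i j hc => ?_, ?_⟩
  · rw [qRelEntropy_eq_sum_klFun hρ hσ htr, Finset.sum_eq_zero_iff_of_nonneg fun i _ =>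
      Finset.sum_nonneg fun j _ => eigenOverlap_mul_klFun_nonneg hρ hσ i j] at h
    have hij := (Finset.sum_eq_zero_iff_of_nonneg fun j _ =>
      eigenOverlap_mul_klFun_nonneg hρ hσ i j).1 (h i (Finset.mem_univ i)) j (Finset.mem_univ j)
    have hq := hσ.eigenvalues_pos j
    rwa [mul_eq_zero, mul_eq_zero, or_iff_right hc, or_iff_right hq.ne',
      klFun_eq_zero_iff (div_pos (hρ.eigenvalues_pos i) hq).le, div_eq_one_iff_eq hq.ne'] at hij
  · rintro rfl
    simp [qRelEntropy]

lemma IsDensityMatrix.eigenvalues_le_one {ρ : Matrix (Fin d) (Fin d) ℂ} (hρ : IsDensityMatrix ρ)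
    (i : Fin d) : hρ.1.1.eigenvalues i ≤ 1 := by
  have hsum : ∑ j, hρ.1.1.eigenvalues j = 1 := by
    simpa [hρ.1.1.trace_eq_sum_eigenvalues] using congrArg Complex.re hρ.2
  exact hsum ▸ Finset.single_le_sum (fun j _ => hρ.1.eigenvalues_nonneg j) (Finset.mem_univ i)

lemma IsDensityMatrix.spectrum_subset_Icc {ρ : Matrix (Fin d) (Fin d) ℂ}
    (hρ : IsDensityMatrix ρ) : spectrum ℝ ρ ⊆ Set.Icc 0 1 := by
  rw [hρ.1.1.spectrum_real_eq_range_eigenvalues]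
  rintro - ⟨i, rfl⟩
  exact ⟨hρ.1.eigenvalues_nonneg i, hρ.eigenvalues_le_one i⟩

lemma mul_matLog_eq_cfc {A : Matrix (Fin d) (Fin d) ℂ} (hA : A.IsHermitian) :
    A * matLog A = cfc (fun x => x * Real.log x) A := by
  rw [matLog_eq_cfc hA, ← hA.cfc_eq, cfc_mul (fun x => x) Real.log A (continuousOn_id' _)
    (finite_real_spectrum.continuousOn _), cfc_id' ℝ A]

lemma continuousOn_re_trace_mul_matLog :
    ContinuousOn (fun ρ : Matrix (Fin d) (Fin d) ℂ => (ρ * matLog ρ).trace.re)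
      {ρ | IsDensityMatrix ρ} := by
  have hcfc : ContinuousOn (fun ρ : Matrix (Fin d) (Fin d) ℂ => cfc (fun x => x * Real.log x) ρ)
      {ρ | IsDensityMatrix ρ} := by
    open scoped Matrix.Norms.L2Operator in
    exact ContinuousOn.cfc' isCompact_Icc _ continuousOn_id
      (fun ρ hρ => IsDensityMatrix.spectrum_subset_Icc hρ)
      (fun ρ hρ => hρ.1.1) Real.continuous_mul_log.continuousOn
  refine (Complex.continuous_re.comp_continuousOn
    (continuous_id.matrix_trace.comp_continuousOn hcfc)).congr fun ρ hρ => ?_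
  rw [mul_matLog_eq_cfc hρ.1.1]
  rfl

lemma integral_qRelEntropy_eq_add {μ : Measure (Matrix (Fin d) (Fin d) ℂ)}
    (hint : ∀ i j, Integrable (fun ρ : Matrix (Fin d) (Fin d) ℂ => ρ i j) μ)
    (hent : Integrable (fun ρ : Matrix (Fin d) (Fin d) ℂ => (ρ * matLog ρ).trace.re) μ)
    (σ : Matrix (Fin d) (Fin d) ℂ) :
    ∫ ρ, qRelEntropy ρ σ ∂μ =
      ∫ ρ, qRelEntropy ρ (matrixMean μ) ∂μ + qRelEntropy (matrixMean μ) σ := by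
  have hsplit : ∀ τ, ∫ ρ, qRelEntropy ρ τ ∂μ =
      ∫ ρ, (ρ * matLog ρ).trace.re ∂μ - (matrixMean μ * matLog τ).trace.re := fun τ => by
    have hcross : Integrable (fun ρ : Matrix (Fin d) (Fin d) ℂ => (ρ * matLog τ).trace.re) μ :=
      (integrable_trace_mul hint _).re
    simp only [qRelEntropy, mul_sub, trace_sub, Complex.sub_re]
    rw [integral_sub hent hcross, re_trace_matrixMean_mul hint]
  rw [hsplit, hsplit]
  simp only [qRelEntropy, mul_sub, trace_sub, Complex.sub_re]
  ring

end QuantumRelativeEntropy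

/-- Let `μ` be a Borel probability measure supported on a compact set of
positive definite density matrices, with mean `ρ̄ = ∫ ρ dμ(ρ)`. Then for every positive
definite density matrix `σ`,
`∫ Tr(ρ (log ρ − log σ)) dμ(ρ) ≥ ∫ Tr(ρ (log ρ − log ρ̄)) dμ(ρ)`, with equality iff
`σ = ρ̄`: the posterior mean is the unique Bayes estimator for quantum relative entropy
loss. -/
theorem relativeEntropy_bayes_estimator_is_mean {d : ℕ}
    (μ : Measure (Matrix (Fin d) (Fin d) ℂ)) [IsProbabilityMeasure μ]
    (K : Set (Matrix (Fin d) (Fin d) ℂ)) (hKcompact : IsCompact K)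
    (hKsub : ∀ ρ ∈ K, IsDensityMatrix ρ ∧ ρ.PosDef)
    (hμK : μ Kᶜ = 0)
    (ρbar : Matrix (Fin d) (Fin d) ℂ)
    (hρbar : ρbar = Matrix.of fun i j => ∫ ρ, ρ i j ∂μ) :
    ∀ σ, IsDensityMatrix σ → σ.PosDef →
      (∫ ρ, ((ρ * (matLog ρ - matLog ρbar)).trace).re ∂μ)
          ≤ (∫ ρ, ((ρ * (matLog ρ - matLog σ)).trace).re ∂μ) ∧
      ((∫ ρ, ((ρ * (matLog ρ - matLog σ)).trace).re ∂μ)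
          = (∫ ρ, ((ρ * (matLog ρ - matLog ρbar)).trace).re ∂μ) ↔ σ = ρbar) := by
  intro σ hσ hσpd
  have hK : ∀ᵐ ρ ∂μ, ρ ∈ K := ae_iff.2 hμK
  have hint : ∀ i j, Integrable (fun ρ : Matrix (Fin d) (Fin d) ℂ => ρ i j) μ := fun i j =>
    integrable_of_continuousOn_of_ae_mem hKcompact hK (continuous_apply_apply i j).continuousOn
  have hent : Integrable (fun ρ : Matrix (Fin d) (Fin d) ℂ => (ρ * matLog ρ).trace.re) μ :=
    integrable_of_continuousOn_of_ae_mem hKcompact hK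
      (continuousOn_re_trace_mul_matLog.mono fun ρ hρ => (hKsub ρ hρ).1)
  have hstates : ∀ᵐ ρ ∂μ, IsDensityMatrix ρ ∧ ρ.PosDef := hK.mono hKsub
  obtain rfl : ρbar = matrixMean μ := hρbar
  have hmean_pd : (matrixMean μ).PosDef := posDef_matrixMean hint (hstates.mono fun _ h => h.2)
  have hmean_tr : (matrixMean μ).trace = σ.trace := by
    rw [trace_matrixMean hint (hstates.mono fun _ h => h.1.2), hσ.2]
  change ∫ ρ, qRelEntropy ρ (matrixMean μ) ∂μ ≤ ∫ ρ, qRelEntropy ρ σ ∂μ ∧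
    (∫ ρ, qRelEntropy ρ σ ∂μ = ∫ ρ, qRelEntropy ρ (matrixMean μ) ∂μ ↔ σ = matrixMean μ)
  rw [integral_qRelEntropy_eq_add hint hent σ, add_eq_left,
    qRelEntropy_eq_zero_iff hmean_pd hσpd hmean_tr, eq_comm]
  exact ⟨le_add_of_nonneg_right (qRelEntropy_nonneg hmean_pd hσpd hmean_tr), Iff.rfl⟩
end

section
/- Klein's inequality / nonnegativity of quantum relative entropy with equality condition: for density matrices ρ and σ of dimension d with σ positive definite and ρ positive definite, Tr(ρ·(log ρ − log σ)) ≥ 0, with equality if and only if ρ = σ. -/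
open Matrix MeasureTheory
open scoped ComplexOrder Classical

lemma klein_log_ineq {p q : ℝ} (hp : 0 < p) (hq : 0 < q) :
    p - q ≤ p * Real.log p - p * Real.log q := by
  have h := Real.log_le_sub_one_of_pos (div_pos hq hp)
  rw [Real.log_div hq.ne' hp.ne'] at h
  have := mul_le_mul_of_nonneg_left h hp.le
  have hpd : p * (q / p) = q := by field_simp
  nlinarith

lemma klein_log_ineq_eq {p q : ℝ} (hp : 0 < p) (hq : 0 < q)
    (h : p * Real.log p - p * Real.log q = p - q) : p = q := by
  by_contra hne
  have h1 : q / p ≠ 1 := by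
    intro hc; exact hne ((div_eq_one_iff_eq hp.ne').mp hc).symm
  have h2 := Real.log_lt_sub_one_of_pos (div_pos hq hp) h1
  rw [Real.log_div hq.ne' hp.ne'] at h2
  have := mul_lt_mul_of_pos_left h2 hp
  have hpd : p * (q / p) = q := by field_simp
  nlinarith

lemma klein_trace_conj {d : ℕ} (U A : Matrix (Fin d) (Fin d) ℂ) (hU : star U * U = 1) :
    (U * A * star U).trace = A.trace := by
  rw [trace_mul_cycle, hU, one_mul]

lemma klein_conj_mul {d : ℕ} (U A B : Matrix (Fin d) (Fin d) ℂ) (hU : star U * U = 1) :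
    (U * A * star U) * (U * B * star U) = U * (A * B) * star U := by
  simp only [mul_assoc]
  rw [show star U * (U * (B * star U)) = B * star U by rw [← mul_assoc, hU, one_mul]]

lemma klein_trace_formula {d : ℕ} (a b : Fin d → ℝ) (M : Matrix (Fin d) (Fin d) ℂ) :
    (diagonal (RCLike.ofReal ∘ a) * (M * (diagonal (RCLike.ofReal ∘ b) * star M))).trace
      = ((∑ i, ∑ j, Complex.normSq (M i j) * (a i * b j) : ℝ) : ℂ) := by
  push_cast
  rw [trace]
  refine Finset.sum_congr rfl fun i _ => ?_
  rw [diag_apply, Matrix.diagonal_mul, Matrix.mul_apply, Finset.mul_sum]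
  refine Finset.sum_congr rfl fun j _ => ?_
  rw [Matrix.diagonal_mul, Matrix.star_apply, Function.comp_apply, Function.comp_apply,
    ← Complex.mul_conj (M i j)]
  simp only [RCLike.ofReal_alg, Complex.real_smul, Complex.star_def]
  ring

/-- **Klein's inequality.** For positive definite density matrices `ρ, σ`,
the quantum relative entropy `Tr(ρ (log ρ − log σ))` is nonnegative, and it vanishes if
and only if `ρ = σ`. -/
theorem klein_inequality {d : ℕ} (ρ σ : Matrix (Fin d) (Fin d) ℂ)
    (hρ : IsDensityMatrix ρ) (hσ : IsDensityMatrix σ)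
    (hρpd : ρ.PosDef) (hσpd : σ.PosDef) :
    0 ≤ ((ρ * (matLog ρ - matLog σ)).trace).re ∧
    (((ρ * (matLog ρ - matLog σ)).trace).re = 0 ↔ ρ = σ) := by
  have hρH : ρ.IsHermitian := hρpd.1
  have hσH : σ.IsHermitian := hσpd.1
  set p : Fin d → ℝ := hρH.eigenvalues with hpdef
  set q : Fin d → ℝ := hσH.eigenvalues with hqdef
  have hppos : ∀ i, 0 < p i := hρpd.eigenvalues_pos
  have hqpos : ∀ i, 0 < q i := hσpd.eigenvalues_pos
  set U : Matrix (Fin d) (Fin d) ℂ := ↑(hρH.eigenvectorUnitary) with hUdef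
  set W : Matrix (Fin d) (Fin d) ℂ := ↑(hσH.eigenvectorUnitary) with hWdef
  have hU1 : star U * U = 1 := mem_unitaryGroup_iff'.mp (hρH.eigenvectorUnitary).2
  have hU2 : U * star U = 1 := mem_unitaryGroup_iff.mp (hρH.eigenvectorUnitary).2
  have hW1 : star W * W = 1 := mem_unitaryGroup_iff'.mp (hσH.eigenvectorUnitary).2
  have hW2 : W * star W = 1 := mem_unitaryGroup_iff.mp (hσH.eigenvectorUnitary).2
  set M : Matrix (Fin d) (Fin d) ℂ := star U * W with hMdef
  set c : Fin d → Fin d → ℝ := fun i j => Complex.normSq (M i j) with hcdef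
  have hcnn : ∀ i j, 0 ≤ c i j := fun i j => Complex.normSq_nonneg _
  have hM1 : M * star M = 1 := by
    rw [hMdef, Matrix.star_mul, star_star, mul_assoc, ← mul_assoc W, hW2, one_mul, hU1]
  have hM2 : star M * M = 1 := by
    rw [hMdef, Matrix.star_mul, star_star, mul_assoc, ← mul_assoc U, hU2, one_mul, hW1]
  -- row and column sums of c
  have hrow : ∀ i, ∑ j, c i j = 1 := by
    intro i
    have h := congrArg (fun X : Matrix (Fin d) (Fin d) ℂ => X i i) hM1
    simp only [Matrix.mul_apply, Matrix.star_apply, Matrix.one_apply_eq] at h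
    have : ((∑ j, c i j : ℝ) : ℂ) = 1 := by
      rw [← h]
      push_cast
      refine Finset.sum_congr rfl fun j _ => ?_
      rw [Complex.star_def, Complex.mul_conj]
    exact_mod_cast this
  have hcol : ∀ j, ∑ i, c i j = 1 := by
    intro j
    have h := congrArg (fun X : Matrix (Fin d) (Fin d) ℂ => X j j) hM2
    simp only [Matrix.mul_apply, Matrix.star_apply, Matrix.one_apply_eq] at h
    have : ((∑ i, c i j : ℝ) : ℂ) = 1 := by
      rw [← h]
      push_cast
      refine Finset.sum_congr rfl fun i _ => ?_
      rw [mul_comm, Complex.star_def, Complex.mul_conj]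
    exact_mod_cast this
  -- spectral decompositions
  have hspecρ : ρ = U * diagonal (RCLike.ofReal ∘ p) * star U := hρH.spectral_theorem
  have hspecσ : σ = W * diagonal (RCLike.ofReal ∘ q) * star W := hσH.spectral_theorem
  have hlogρ : matLog ρ = U * diagonal (RCLike.ofReal ∘ Real.log ∘ p) * star U := by
    rw [matLog, dif_pos hρH]; rfl
  have hlogσ : matLog σ = W * diagonal (RCLike.ofReal ∘ Real.log ∘ q) * star W := by
    rw [matLog, dif_pos hσH]; rfl
  -- sums of eigenvalues are 1
  have hsump : ∑ i, p i = 1 := by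
    have h := hρ.2
    rw [hspecρ, klein_trace_conj _ _ hU1, trace_diagonal] at h
    have : ((∑ i, p i : ℝ) : ℂ) = 1 := by push_cast; rw [← h]; rfl
    exact_mod_cast this
  have hsumq : ∑ i, q i = 1 := by
    have h := hσ.2
    rw [hspecσ, klein_trace_conj _ _ hW1, trace_diagonal] at h
    have : ((∑ i, q i : ℝ) : ℂ) = 1 := by push_cast; rw [← h]; rfl
    exact_mod_cast this
  -- the two trace computations
  have hT1 : (ρ * matLog ρ).trace = ((∑ i, p i * Real.log (p i) : ℝ) : ℂ) := by
    rw [hlogρ, hspecρ, klein_conj_mul _ _ _ hU1, klein_trace_conj _ _ hU1,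
      diagonal_mul_diagonal, trace_diagonal]
    push_cast
    rfl
  have hT2 : (ρ * matLog σ).trace
      = ((∑ i, ∑ j, c i j * (p i * Real.log (q j)) : ℝ) : ℂ) := by
    rw [hlogσ, hspecρ]
    have hE : (U * diagonal (RCLike.ofReal ∘ p) * star U) *
        (W * diagonal (RCLike.ofReal ∘ Real.log ∘ q) * star W)
        = U * (diagonal (RCLike.ofReal ∘ p) *
            (M * (diagonal (RCLike.ofReal ∘ Real.log ∘ q) * star M))) * star U := by
      rw [hMdef, Matrix.star_mul, star_star]
      simp only [mul_assoc]
      rw [hU2, mul_one]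
    rw [hE, klein_trace_conj _ _ hU1, klein_trace_formula]
    rfl
  -- main identity for the relative entropy
  have hkey : ((ρ * (matLog ρ - matLog σ)).trace).re
      = ∑ i, ∑ j, c i j * (p i * Real.log (p i) - p i * Real.log (q j)) := by
    rw [mul_sub, trace_sub, hT1, hT2, Complex.sub_re, Complex.ofReal_re, Complex.ofReal_re]
    have h1 : ∑ i, p i * Real.log (p i)
        = ∑ i, ∑ j, c i j * (p i * Real.log (p i)) := by
      refine Finset.sum_congr rfl fun i _ => ?_
      rw [← Finset.sum_mul, hrow i, one_mul]
    rw [h1, ← Finset.sum_sub_distrib]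
    refine Finset.sum_congr rfl fun i _ => ?_
    rw [← Finset.sum_sub_distrib]
    exact Finset.sum_congr rfl fun j _ => by ring
  -- the lower bound sum is zero
  have hzero : ∑ i, ∑ j, c i j * (p i - q j) = 0 := by
    have h1 : ∑ i, ∑ j, c i j * p i = 1 := by
      rw [show ∑ i, ∑ j, c i j * p i = ∑ i, (∑ j, c i j) * p i from
        Finset.sum_congr rfl fun i _ => (Finset.sum_mul _ _ _).symm]
      simp only [hrow, one_mul]
      exact hsump
    have h2 : ∑ i, ∑ j, c i j * q j = 1 := by
      rw [Finset.sum_comm]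
      rw [show ∑ j, ∑ i, c i j * q j = ∑ j, (∑ i, c i j) * q j from
        Finset.sum_congr rfl fun j _ => (Finset.sum_mul _ _ _).symm]
      simp only [hcol, one_mul]
      exact hsumq
    simp only [mul_sub, Finset.sum_sub_distrib]
    rw [h1, h2, sub_self]
  have hterm : ∀ i j, c i j * (p i - q j)
      ≤ c i j * (p i * Real.log (p i) - p i * Real.log (q j)) := fun i j =>
    mul_le_mul_of_nonneg_left (klein_log_ineq (hppos i) (hqpos j)) (hcnn i j)
  have hnonneg : 0 ≤ ((ρ * (matLog ρ - matLog σ)).trace).re := by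
    rw [hkey, ← hzero]
    exact Finset.sum_le_sum fun i _ => Finset.sum_le_sum fun j _ => hterm i j
  refine ⟨hnonneg, ?_, ?_⟩
  · -- equality implies ρ = σ
    intro h0
    have hsum : ∑ i, ∑ j, (c i j * (p i * Real.log (p i) - p i * Real.log (q j))
        - c i j * (p i - q j)) = 0 := by
      simp only [Finset.sum_sub_distrib]
      rw [← hkey, hzero, h0, sub_zero]
    have hall : ∀ i, ∀ j, c i j * (p i * Real.log (p i) - p i * Real.log (q j))
        - c i j * (p i - q j) = 0 := by
      have houter := (Finset.sum_eq_zero_iff_of_nonneg (fun i _ =>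
        Finset.sum_nonneg fun j _ => sub_nonneg.mpr (hterm i j))).mp hsum
      intro i j
      have := (Finset.sum_eq_zero_iff_of_nonneg (fun j _ =>
        sub_nonneg.mpr (hterm i j))).mp (houter i (Finset.mem_univ i)) j (Finset.mem_univ j)
      exact this
    have hpq : ∀ i j, M i j ≠ 0 → p i = q j := by
      intro i j hMij
      have hc : c i j ≠ 0 := fun hc => hMij (Complex.normSq_eq_zero.mp hc)
      have h := hall i j
      rw [← mul_sub, mul_eq_zero] at h
      rcases h with h | h
      · exact absurd h hc
      · exact klein_log_ineq_eq (hppos i) (hqpos j) (by linarith [sub_eq_zero.mp h])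
    have hDM : diagonal (RCLike.ofReal ∘ p) * M = M * diagonal (RCLike.ofReal ∘ q) := by
      ext i j
      rw [Matrix.diagonal_mul, Matrix.mul_diagonal]
      by_cases hMij : M i j = 0
      · rw [hMij, mul_zero, zero_mul]
      · rw [Function.comp_apply, Function.comp_apply, hpq i j hMij, mul_comm]
    have hUM : U * M = W := by
      rw [hMdef, ← mul_assoc, hU2, one_mul]
    calc ρ = U * diagonal (RCLike.ofReal ∘ p) * star U := hspecρ
      _ = U * diagonal (RCLike.ofReal ∘ p) * star U * (W * star W) := by
          rw [hW2, mul_one]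
      _ = U * (diagonal (RCLike.ofReal ∘ p) * M) * star W := by
          rw [hMdef]; simp only [mul_assoc]
      _ = U * (M * diagonal (RCLike.ofReal ∘ q)) * star W := by rw [hDM]
      _ = W * diagonal (RCLike.ofReal ∘ q) * star W := by
          rw [← mul_assoc U M, hUM]
      _ = σ := hspecσ.symm
  · intro h
    subst h
    simp
end
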